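/- Closing a path does not change its signed area: let Γ = (γ₁, γ₂) : [0,1] → ℝ² be a Lipschitz path, and let Γ̃ = Γ * L be the concatenation of Γ with the linear path L(t) = Γ(1) + t·(Γ(0) − Γ(1)) from Γ(1) to Γ(0). Then A(Γ̃) = A(Γ), where for a Lipschitz path Λ = (λ₁, λ₂) the signed area is A(Λ) = (1/2) ∫₀¹ [ (λ₁(t) − λ₁(0)) λ₂'(t) − (λ₂(t) − λ₂(0)) λ₁'(t) ] dt. -/

import Mathlib

/-!
On `[0, 1/2]` the closed path runs through `Γ` at double speed, so there its area integrand is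
`t ↦ 2 F (2t)`, with `F` the area integrand of `Γ`, and the substitution `s = 2t` returns `A(Γ)`.
On `[1/2, 1]` it runs along the line through its base point `Γ(0)`: its displacement from the base
point is parallel to its velocity, so the integrand vanishes there.
-/

noncomputable section

/-- Concatenation of paths: `(Γ₁*Γ₂)(t) = Γ₁(2t)` for `t ∈ [0,1/2)` and
`(Γ₁*Γ₂)(t) = Γ₁(1) − Γ₂(0) + Γ₂(2t−1)` for `t ∈ [1/2,1]`. -/
def concat (Γ₁ Γ₂ : ℝ → EuclideanSpace ℝ (Fin 2)) : ℝ → EuclideanSpace ℝ (Fin 2) :=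
  fun t => if t < 1/2 then Γ₁ (2 * t) else Γ₁ 1 - Γ₂ 0 + Γ₂ (2 * t - 1)

/-- The signed area of a path `Λ = (λ₁, λ₂) : [0,1] → ℝ²`:
`A(Λ) = (1/2) ∫₀¹ [ (λ₁(t) − λ₁(0)) λ₂'(t) − (λ₂(t) − λ₂(0)) λ₁'(t) ] dt`. -/
def signedArea (Λ : ℝ → EuclideanSpace ℝ (Fin 2)) : ℝ :=
  (1/2) * ∫ t in (0:ℝ)..1,
    ((Λ t 0 - Λ 0 0) * deriv (fun s => Λ s 1) t -
     (Λ t 1 - Λ 0 1) * deriv (fun s => Λ s 0) t)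

open MeasureTheory Set Filter Topology

/-- The base point `p` is a separate argument, so that near `t` the path may be replaced by one
with a different value at `0`. -/
def areaIntegrand (p : EuclideanSpace ℝ (Fin 2)) (Λ : ℝ → EuclideanSpace ℝ (Fin 2)) (t : ℝ) :
    ℝ :=
  (Λ t 0 - p 0) * deriv (fun s => Λ s 1) t - (Λ t 1 - p 1) * deriv (fun s => Λ s 0) t

lemma signedArea_eq_integral_areaIntegrand (Λ : ℝ → EuclideanSpace ℝ (Fin 2)) :
    signedArea Λ = 1 / 2 * ∫ t in (0 : ℝ)..1, areaIntegrand (Λ 0) Λ t :=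
  rfl

section areaIntegrand

variable (p : EuclideanSpace ℝ (Fin 2))

lemma areaIntegrand_congr_of_eventuallyEq {Λ Λ' : ℝ → EuclideanSpace ℝ (Fin 2)} {t : ℝ}
    (h : Λ =ᶠ[𝓝 t] Λ') : areaIntegrand p Λ t = areaIntegrand p Λ' t := by
  have hderiv (i : Fin 2) : deriv (fun s => Λ s i) t = deriv (fun s => Λ' s i) t :=
    (h.fun_comp (· i)).deriv_eq
  simp only [areaIntegrand, h.eq_of_nhds, hderiv]

lemma areaIntegrand_comp_mul_left (Λ : ℝ → EuclideanSpace ℝ (Fin 2)) (c t : ℝ) :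
    areaIntegrand p (fun s => Λ (c * s)) t = c * areaIntegrand p Λ (c * t) := by
  simp only [areaIntegrand, deriv_comp_mul_left (f := fun s => Λ s _), smul_eq_mul]
  ring

lemma areaIntegrand_self_add_smul (v : EuclideanSpace ℝ (Fin 2)) (f : ℝ → ℝ) (t : ℝ) :
    areaIntegrand p (fun s => p + f s • v) t = 0 := by
  simp only [areaIntegrand, PiLp.add_apply, PiLp.smul_apply, smul_eq_mul, deriv_const_add,
    deriv_mul_const_field]
  ring

lemma LipschitzOnWith.intervalIntegrable_areaIntegrand {Λ : ℝ → EuclideanSpace ℝ (Fin 2)}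
    {K : NNReal} {a b : ℝ} (hΛ : LipschitzOnWith K Λ (uIcc a b)) :
    IntervalIntegrable (areaIntegrand p Λ) volume a b := by
  have hcoord (i : Fin 2) :=
    (EuclideanSpace.proj (𝕜 := ℝ) (ι := Fin 2) i).lipschitz.comp_lipschitzOnWith hΛ
  have hterm (i j : Fin 2) :
      IntervalIntegrable (fun t => (Λ t i - p i) * deriv (fun s => Λ s j) t) volume a b :=
    (hcoord j).absolutelyContinuousOnInterval.intervalIntegrable_deriv.continuousOn_mul
      ((hcoord i).continuousOn.sub continuousOn_const)
  exact (hterm 0 1).sub (hterm 1 0)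

end areaIntegrand

section concat

variable (Γ₁ Γ₂ : ℝ → EuclideanSpace ℝ (Fin 2))

lemma concat_zero : concat Γ₁ Γ₂ 0 = Γ₁ 0 := by
  norm_num [concat]

lemma concat_eventuallyEq_of_lt {t : ℝ} (ht : t < 1 / 2) :
    concat Γ₁ Γ₂ =ᶠ[𝓝 t] fun s => Γ₁ (2 * s) := by
  filter_upwards [Iio_mem_nhds ht] with s hs
  exact if_pos hs

lemma concat_eventuallyEq_of_gt {t : ℝ} (ht : 1 / 2 < t) :
    concat Γ₁ Γ₂ =ᶠ[𝓝 t] fun s => Γ₁ 1 - Γ₂ 0 + Γ₂ (2 * s - 1) := by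
  filter_upwards [Ioi_mem_nhds ht] with s hs
  exact if_neg (not_lt.2 hs.le)

lemma areaIntegrand_concat_of_lt (p : EuclideanSpace ℝ (Fin 2)) {t : ℝ} (ht : t < 1 / 2) :
    areaIntegrand p (concat Γ₁ Γ₂) t = 2 * areaIntegrand p Γ₁ (2 * t) := by
  rw [areaIntegrand_congr_of_eventuallyEq p (concat_eventuallyEq_of_lt Γ₁ Γ₂ ht),
    areaIntegrand_comp_mul_left]

lemma areaIntegrand_concat_of_gt (p : EuclideanSpace ℝ (Fin 2)) {t : ℝ} (ht : 1 / 2 < t) :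
    areaIntegrand p (concat Γ₁ Γ₂) t =
      areaIntegrand p (fun s => Γ₁ 1 - Γ₂ 0 + Γ₂ (2 * s - 1)) t :=
  areaIntegrand_congr_of_eventuallyEq p (concat_eventuallyEq_of_gt Γ₁ Γ₂ ht)

end concat

lemma areaIntegrand_close_path_of_gt (Γ : ℝ → EuclideanSpace ℝ (Fin 2)) {t : ℝ}
    (ht : 1 / 2 < t) :
    areaIntegrand (Γ 0) (concat Γ (fun t => Γ 1 + t • (Γ 0 - Γ 1))) t = 0 := by
  rw [areaIntegrand_concat_of_gt _ _ _ ht]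
  convert areaIntegrand_self_add_smul (Γ 0) (Γ 1 - Γ 0) (fun s => 2 - 2 * s) t using 2
  funext s
  module

/-- Closing a path does not change its signed area: if `Γ : [0,1] → ℝ²` is a
Lipschitz path and `Γ̃ = Γ * L` is the concatenation of `Γ` with the linear path
`L(t) = Γ(1) + t·(Γ(0) − Γ(1))` from `Γ(1)` to `Γ(0)`, then `A(Γ̃) = A(Γ)`. -/
theorem signedArea_close_path (Γ : ℝ → EuclideanSpace ℝ (Fin 2))
    (hΓ : ∃ K : NNReal, LipschitzOnWith K Γ (Set.Icc 0 1)) :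
    signedArea (concat Γ (fun t => Γ 1 + t • (Γ 0 - Γ 1))) = signedArea Γ := by
  obtain ⟨K, hK⟩ := hΓ
  set G := concat Γ (fun t => Γ 1 + t • (Γ 0 - Γ 1))
  set F := areaIntegrand (Γ 0) Γ
  have first_half : EqOn (areaIntegrand (Γ 0) G) (fun t => 2 * F (2 * t)) (Ioo 0 (1 / 2)) :=
    fun t ht => areaIntegrand_concat_of_lt _ _ _ ht.2
  have second_half : EqOn (areaIntegrand (Γ 0) G) (fun _ => 0) (Ioo (1 / 2) 1) :=
    fun t ht => areaIntegrand_close_path_of_gt Γ ht.1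
  have hF : IntervalIntegrable F volume 0 1 :=
    LipschitzOnWith.intervalIntegrable_areaIntegrand _ (by rwa [uIcc_of_le zero_le_one])
  have hF₂ : IntervalIntegrable (fun t => 2 * F (2 * t)) volume 0 (1 / 2) := by
    simpa using (hF.comp_mul_left (c := 2)).const_mul 2
  have hG₁ : IntervalIntegrable (areaIntegrand (Γ 0) G) volume 0 (1 / 2) :=
    hF₂.congr_uIoo (by rw [uIoo_of_le (by norm_num)]; exact first_half.symm)
  have hG₂ : IntervalIntegrable (areaIntegrand (Γ 0) G) volume (1 / 2) 1 :=
    (intervalIntegrable_const (c := (0 : ℝ))).congr_uIoo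
      (by rw [uIoo_of_le (by norm_num)]; exact second_half.symm)
  have hsubst : ∫ t in (0 : ℝ)..1 / 2, 2 * F (2 * t) = ∫ t in (0 : ℝ)..1, F t := by
    rw [intervalIntegral.integral_const_mul, intervalIntegral.integral_comp_mul_left F two_ne_zero]
    norm_num
    ring
  rw [signedArea_eq_integral_areaIntegrand, signedArea_eq_integral_areaIntegrand,
    show G 0 = Γ 0 from concat_zero _ _,
    ← intervalIntegral.integral_add_adjacent_intervals hG₁ hG₂,
    intervalIntegral.integral_congr_Ioo_of_le (by norm_num) first_half,
    intervalIntegral.integral_congr_Ioo_of_le (by norm_num) second_half,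
    intervalIntegral.integral_zero, add_zero, hsubst]
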